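/- arXiv:1304.1731 — 2 statements merged into one kernel-verified Lean document; each statement's English description precedes it below -/
import Mathlib

section
/- A function f : G → S(GF(q)) is bent (i.e., norm(f̂(α)) = |G| mod p for all α ∈ G) if and only if for every α ∈ G with α ≠ 0_G, Σ_{x∈G} f(α + x)·(f(x))^{p^n} = 0. -/
/-!
Write `σ y = y ^ p ^ n` for the conjugation. Because the characters take values in `S(GF(q))`,
`σ (χ_α x) = χ_α (-x)`, so `norm (f̂ α)` is the Fourier transform of the autocorrelation
`D β = ∑ x, f (β + x) * σ (f x)`, and `D 0 = |G|` since `f` is `S(GF(q))`-valued. Thus `f` is bent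
iff `D` and `|G| • δ₀` have the same Fourier transform. Since `|G|` is prime to `p`, Fourier
inversion holds over `GF(q)`, so this happens iff `D` vanishes off `0`.
-/

open Finset

def AddChar.ofMapAddEqMul {A M : Type*} [AddMonoid A] [MonoidWithZero M]
    [IsLeftCancelMulZero M] (φ : A → M)
    (hadd : ∀ x y, φ (x + y) = φ x * φ y) (h0 : φ 0 ≠ 0) : AddChar A M where
  toFun := φ
  map_zero_eq_one' := (mul_eq_left₀ h0).1 (by rw [← hadd, add_zero])
  map_add_eq_mul' := hadd

lemma AddChar.pow_eq_map_neg_of_pow_succ_eq_one {A M : Type*} [AddGroup A] [CommMonoid M]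
    (ψ : AddChar A M) {x : A} {m : ℕ} (h : ψ x ^ (m + 1) = 1) : ψ x ^ m = ψ (-x) := by
  calc ψ x ^ m = ψ (-x) * ψ x * ψ x ^ m := by
        rw [← AddChar.map_add_eq_mul, neg_add_cancel, AddChar.map_zero_eq_one, one_mul]
    _ = ψ (-x) := by rw [mul_assoc, ← pow_succ', h, mul_one]

lemma natCast_card_ne_zero_of_forall_nsmul_eq_zero {R G : Type*} [AddGroupWithOne R]
    [AddGroup G] [Fintype G] {p m : ℕ} [CharP R p] (hp : p.Prime) (hm : ¬ p ∣ m)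
    (hexp : ∀ x : G, m • x = 0) : (Fintype.card G : R) ≠ 0 := by
  have := Fact.mk hp
  rw [Ne, CharP.cast_eq_zero_iff R p]
  intro hdvd
  obtain ⟨x, hx⟩ := exists_prime_addOrderOf_dvd_card p hdvd
  exact hm (hx ▸ addOrderOf_dvd_of_nsmul_eq_zero (hexp x))

section Fourier

variable {G R : Type*} [AddCommGroup G] [Fintype G] [CommRing R]

def fourierSum (ψ : G → AddChar G R) (f : G → R) (α : G) : R := ∑ x, f x * ψ α x

/-- `autocorrelation σ f β` is the sum of the derivative `d_β f` when `σ` is the conjugation. -/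
def autocorrelation (σ : R →+* R) (f : G → R) (β : G) : R := ∑ x, f (β + x) * σ (f x)

lemma autocorrelation_zero {σ : R →+* R} {f : G → R} (hf : ∀ x, f x * σ (f x) = 1) :
    autocorrelation σ f 0 = Fintype.card G := by
  simp [autocorrelation, hf]

/-- The Wiener–Khinchin identity. -/
lemma fourierSum_mul_map_fourierSum (ψ : G → AddChar G R) (σ : R →+* R)
    (hσ : ∀ α x, σ (ψ α x) = ψ α (-x)) (f : G → R) (α : G) :
    fourierSum ψ f α * σ (fourierSum ψ f α) = fourierSum ψ (autocorrelation σ f) α := by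
  have hconj : σ (fourierSum ψ f α) = ∑ y, σ (f y) * ψ α (-y) := by
    simp only [fourierSum, map_sum, map_mul, hσ]
  have hshift : ∀ y, ∑ x, f x * ψ α x * (σ (f y) * ψ α (-y)) =
      ∑ β, f (β + y) * σ (f y) * ψ α β := fun y =>
    Fintype.sum_equiv (Equiv.subRight y) _ _ fun x => by
      rw [Equiv.subRight_apply, sub_add_cancel, sub_eq_add_neg, AddChar.map_add_eq_mul]
      ring
  rw [hconj, fourierSum, sum_mul_sum, sum_comm, sum_congr rfl fun y _ => hshift y, sum_comm]
  simp only [fourierSum, autocorrelation, sum_mul]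

lemma fourierSum_eq_apply_zero {ψ : G → AddChar G R} {D : G → R} (hD : ∀ β ≠ 0, D β = 0)
    (α : G) : fourierSum ψ D α = D 0 := by
  classical
  rw [fourierSum, sum_eq_single 0 (fun β _ hβ => by rw [hD β hβ, zero_mul]) (by simp),
    AddChar.map_zero_eq_one, mul_one]

variable [IsDomain R] {ψ : G → AddChar G R}

lemma sum_apply_eq_zero_of_ne_zero (hsymm : ∀ α x, ψ α x = ψ x α)
    (hnondeg : ∀ α, ψ α = 0 → α = 0) {β : G} (hβ : β ≠ 0) : ∑ α, ψ α β = 0 := by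
  classical
  simp only [hsymm _ β, AddChar.sum_eq_ite (ψ β), if_neg (mt (hnondeg β) hβ)]

lemma sum_fourierSum_mul_apply_neg (hsymm : ∀ α x, ψ α x = ψ x α)
    (hnondeg : ∀ α, ψ α = 0 → α = 0) (D : G → R) (β₀ : G) :
    ∑ α, fourierSum ψ D α * ψ α (-β₀) = Fintype.card G * D β₀ := by
  classical
  have horth : ∀ β, ∑ α, D β * ψ α (β - β₀) = if β = β₀ then Fintype.card G * D β₀ else 0 := by
    intro β
    split_ifs with h
    · simp [h, mul_comm]
    · rw [← mul_sum, sum_apply_eq_zero_of_ne_zero hsymm hnondeg (sub_ne_zero.2 h), mul_zero]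
  simp_rw [fourierSum, sum_mul, mul_assoc, ← AddChar.map_add_eq_mul, ← sub_eq_add_neg]
  rw [sum_comm, sum_congr rfl fun β _ => horth β, sum_ite_eq' univ β₀, if_pos (mem_univ _)]

lemma eq_zero_of_fourierSum_eq_const (hsymm : ∀ α x, ψ α x = ψ x α)
    (hnondeg : ∀ α, ψ α = 0 → α = 0) (hcard : (Fintype.card G : R) ≠ 0) {D : G → R} {c : R}
    (hD : ∀ α, fourierSum ψ D α = c) {β : G} (hβ : β ≠ 0) : D β = 0 := by
  have h := sum_fourierSum_mul_apply_neg hsymm hnondeg D β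
  rw [sum_congr rfl fun α _ => by rw [hD α], ← mul_sum,
    sum_apply_eq_zero_of_ne_zero hsymm hnondeg (neg_ne_zero.2 hβ), mul_zero] at h
  exact (mul_eq_zero.1 h.symm).resolve_left hcard

end Fourier

/-- Combinatorial characterization of bentness over `GF(q)`: an `S(GF(q))`-valued
function `f` is bent (`norm (f̂ α) = |G| mod p` for all `α`) iff all its derivatives
in nonzero directions sum to zero: `∑ x, f (α + x) * conj (f x) = 0` for `α ≠ 0`. -/
theorem bent_iff_derivatives (p n : ℕ) (hp : Nat.Prime p) (hn : n ≠ 0)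
    (F : Type*) [Field F] [Fintype F] (hF : Fintype.card F = p ^ (2 * n))
    (G : Type*) [AddCommGroup G] [Fintype G]
    (hexp : ∀ x : G, (p ^ n + 1) • x = 0)
    (χ : G → G → F)
    (hadd : ∀ α x y : G, χ α (x + y) = χ α x * χ α y)
    (hroot : ∀ α x : G, χ α x ^ (p ^ n + 1) = 1)
    (hsymm : ∀ α x : G, χ α x = χ x α)
    (hinj : ∀ α : G, (∀ x : G, χ α x = 1) → α = 0)
    (f : G → F) (hf : ∀ x : G, f x * (f x) ^ p ^ n = 1) :
    (∀ α : G, (∑ x : G, f x * χ α x) * ((∑ x : G, f x * χ α x)) ^ p ^ n =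
        (Fintype.card G : F)) ↔
      (∀ α : G, α ≠ 0 → ∑ x : G, f (α + x) * (f x) ^ p ^ n = 0) := by
  have := Fact.mk hp
  have : CharP F p := charP_of_card_eq_prime_pow hF
  let ψ : G → AddChar G F := fun α =>
    AddChar.ofMapAddEqMul (χ α) (hadd α) fun h => by simpa [h] using hroot α 0
  have hσ : ∀ α x, iterateFrobenius F p n (ψ α x) = ψ α (-x) := fun α x =>
    (ψ α).pow_eq_map_neg_of_pow_succ_eq_one (hroot α x)
  have hnondeg : ∀ α, ψ α = 0 → α = 0 := fun α h => hinj α (AddChar.eq_zero_iff.1 h)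
  have hcard : (Fintype.card G : F) ≠ 0 :=
    natCast_card_ne_zero_of_forall_nsmul_eq_zero hp
      (fun h => hp.not_dvd_one ((Nat.dvd_add_right (dvd_pow_self p hn)).1 h)) hexp
  have hnorm : ∀ α, (∑ x, f x * χ α x) * (∑ x, f x * χ α x) ^ p ^ n =
      fourierSum ψ (autocorrelation (iterateFrobenius F p n) f) α :=
    fourierSum_mul_map_fourierSum ψ _ hσ f
  constructor
  · intro hbent β hβ
    exact eq_zero_of_fourierSum_eq_const (ψ := ψ) hsymm hnondeg hcard
      (fun α => (hnorm α).symm.trans (hbent α)) hβ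
  · intro hder α
    rw [hnorm, fourierSum_eq_apply_zero (D := autocorrelation (iterateFrobenius F p n) f) hder]
    exact autocorrelation_zero hf
end

section
/- Maiorana–McFarland construction: for any function g : G → S(GF(q)), the function f : G × G → S(GF(q)) defined by f(x, y) = χ_x(y)·g(y) is bent, i.e., norm(f̂(α,β)) = |G×G| mod p for all (α,β) ∈ G × G. -/
/-!
Summing over `x` first, orthogonality of the characters `x ↦ χ x (y + α)` collapses the Fourier
transform to the single term `|G| * g (-α) * χ β (-α)`. Both `g (-α)` and `χ β (-α)` have norm one,
and `|G|` lies in the prime field, so it is fixed by the conjugation `y ↦ y ^ p ^ n`.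
-/

open Finset

lemma map_zero_eq_one_of_map_add {G M₀ : Type*} [AddZeroClass G] [MonoidWithZero M₀]
    [IsLeftCancelMulZero M₀] {ψ : G → M₀} (hψ : ∀ x y, ψ (x + y) = ψ x * ψ y) (h0 : ψ 0 ≠ 0) : ψ 0 = 1 :=
  (mul_eq_left₀ h0).mp (by rw [← hψ, add_zero])

section Pairing

variable {G R : Type*} [AddCommGroup G] [CommRing R] {χ : G → G → R}

def pairingChar (hadd : ∀ α x y, χ α (x + y) = χ α x * χ α y) (hone : ∀ α, χ α 0 = 1) (α : G) :
    AddChar G R where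
  toFun := χ α
  map_zero_eq_one' := hone α
  map_add_eq_mul' := hadd α

variable [Fintype G] [IsDomain R]

lemma sum_pairing_eq_ite [DecidableEq G] (hadd : ∀ α x y, χ α (x + y) = χ α x * χ α y)
    (hone : ∀ α, χ α 0 = 1) (hsymm : ∀ α x, χ α x = χ x α)
    (hinj : ∀ α, (∀ x, χ α x = 1) → α = 0) (c : G) :
    ∑ x, χ c x = if c = 0 then (Fintype.card G : R) else 0 := by
  have hc : pairingChar hadd hone c = 0 ↔ c = 0 := by
    refine AddChar.eq_zero_iff.trans ⟨hinj c, ?_⟩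
    rintro rfl x
    exact (hsymm 0 x).trans (hone x)
  classical
  exact (AddChar.sum_eq_ite (pairingChar hadd hone c)).trans (by simp only [hc])

theorem sum_sum_pairing_mul_eq (hadd : ∀ α x y, χ α (x + y) = χ α x * χ α y)
    (hone : ∀ α, χ α 0 = 1) (hsymm : ∀ α x, χ α x = χ x α)
    (hinj : ∀ α, (∀ x, χ α x = 1) → α = 0) (g : G → R) (α β : G) :
    ∑ x, ∑ y, (χ x y * g y) * (χ α x * χ β y) =
      Fintype.card G * (g (-α) * χ β (-α)) := by
  classical
  calc ∑ x, ∑ y, (χ x y * g y) * (χ α x * χ β y)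
      = ∑ y, g y * χ β y * ∑ x, χ (y + α) x := by
        rw [sum_comm]
        refine sum_congr rfl fun y _ => ?_
        rw [mul_sum]
        refine sum_congr rfl fun x _ => ?_
        rw [hsymm (y + α), hadd, hsymm α x]
        ring
    _ = ∑ y, g y * χ β y * if y = -α then (Fintype.card G : R) else 0 := by
        simp_rw [sum_pairing_eq_ite hadd hone hsymm hinj, add_eq_zero_iff_eq_neg]
    _ = Fintype.card G * (g (-α) * χ β (-α)) := by
        simp only [mul_ite, mul_zero, sum_ite_eq', mem_univ, if_true]
        ring

end Pairing

theorem maiorana_mcfarland_general (p n : ℕ) (hp : Nat.Prime p)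
    (F : Type*) [Field F] [Fintype F] (hF : Fintype.card F = p ^ (2 * n))
    (G : Type*) [AddCommGroup G] [Fintype G]
    (χ : G → G → F)
    (hadd : ∀ α x y : G, χ α (x + y) = χ α x * χ α y)
    (hroot : ∀ α x : G, χ α x ^ (p ^ n + 1) = 1)
    (hsymm : ∀ α x : G, χ α x = χ x α)
    (hinj : ∀ α : G, (∀ x : G, χ α x = 1) → α = 0)
    (g : G → F) (hg : ∀ y : G, g y * (g y) ^ p ^ n = 1) :
    ∀ α β : G,
      (∑ x : G, ∑ y : G, (χ x y * g y) * (χ α x * χ β y)) *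
        ((∑ x : G, ∑ y : G, (χ x y * g y) * (χ α x * χ β y))) ^ p ^ n =
        (Fintype.card (G × G) : F) := by
  have : Fact p.Prime := ⟨hp⟩
  have : CharP F p := charP_of_card_eq_prime_pow hF
  have hone : ∀ α, χ α 0 = 1 := fun α =>
    map_zero_eq_one_of_map_add (hadd α) (IsUnit.of_pow_eq_one (hroot α 0) (by omega)).ne_zero
  have hχ : ∀ α x, χ α x * χ α x ^ p ^ n = 1 := fun α x => by rw [← pow_succ']; exact hroot α x
  have hcard : (Fintype.card G : F) ^ p ^ n = Fintype.card G :=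
    map_natCast (iterateFrobenius F p n) _
  intro α β
  rw [sum_sum_pairing_mul_eq hadd hone hsymm hinj, Fintype.card_prod, Nat.cast_mul]
  set c : F := (Fintype.card G : F)
  calc c * (g (-α) * χ β (-α)) * (c * (g (-α) * χ β (-α))) ^ p ^ n
      = c * c ^ p ^ n * ((g (-α) * g (-α) ^ p ^ n) * (χ β (-α) * χ β (-α) ^ p ^ n)) := by ring
    _ = c * c := by rw [hcard, hg, hχ, mul_one, mul_one]

/-- Maiorana–McFarland construction over `GF(q)`: for any `g : G → S(GF(q))`, the
function `f (x, y) = χ x y * g y` on `G × G` is bent: its Fourier transform (with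
respect to the product pairing `χ_(α,β) (x,y) = χ α x * χ β y`) satisfies
`norm (f̂ (α, β)) = |G × G| mod p` for all `(α, β)`. -/
theorem maiorana_mcfarland (p n : ℕ) (hp : Nat.Prime p) (hn : n ≠ 0)
    (F : Type*) [Field F] [Fintype F] (hF : Fintype.card F = p ^ (2 * n))
    (G : Type*) [AddCommGroup G] [Fintype G]
    (hexp : ∀ x : G, (p ^ n + 1) • x = 0)
    (χ : G → G → F)
    (hadd : ∀ α x y : G, χ α (x + y) = χ α x * χ α y)
    (hroot : ∀ α x : G, χ α x ^ (p ^ n + 1) = 1)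
    (hsymm : ∀ α x : G, χ α x = χ x α)
    (hinj : ∀ α : G, (∀ x : G, χ α x = 1) → α = 0)
    (g : G → F) (hg : ∀ y : G, g y * (g y) ^ p ^ n = 1) :
    ∀ α β : G,
      (∑ x : G, ∑ y : G, (χ x y * g y) * (χ α x * χ β y)) *
        ((∑ x : G, ∑ y : G, (χ x y * g y) * (χ α x * χ β y))) ^ p ^ n =
        (Fintype.card (G × G) : F) :=
  maiorana_mcfarland_general p n hp F hF G χ hadd hroot hsymm hinj g hg
end
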